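/- arXiv:math/0511421 — 2 statements merged into one kernel-verified Lean document; each statement's English description precedes it below -/
import Mathlib

section
/- Let A be a d×d dilation matrix (all eigenvalues of modulus > 1) and V ⊆ R^d a bounded set with 0 in its interior and V ⊆ AV. Set C = AV \ V. Then the sets {A^j C}_{j∈Z} are pairwise disjoint and their union is R^d \ {0}. -/
/-!
Write `W j = A ^ j • V`. From `V ⊆ A • V` the sets `W j` increase with `j`, and
`A ^ j • C = W (j + 1) \ W j`; so the annuli are pairwise disjoint and cover exactly
`(⋃ j, W j) \ ⋂ j, W j`. The spectrum of `A⁻¹` lies in the open unit disc, so Gelfand's formula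
gives `A⁻¹ ^ k → 0`. Hence every `x` lies in some `W k` (as `A⁻¹ ^ k x` eventually enters the
neighbourhood `V` of `0`), and `⋂ j, W j = {0}` (as `A⁻¹ ^ k` shrinks the bounded set `V` to `0`
uniformly).
-/

/-- Integer powers of a matrix (negative powers via the inverse matrix). -/
noncomputable def zMatPow {d : ℕ} (A : Matrix (Fin d) (Fin d) ℝ) (j : ℤ) :
    Matrix (Fin d) (Fin d) ℝ :=
  if 0 ≤ j then A ^ j.toNat else A⁻¹ ^ (-j).toNat

open Filter Function Topology Set
open scoped Pointwise

section MonotoneInt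
variable {α : Type*} {W : ℤ → Set α}

theorem Monotone.pairwise_disjoint_sdiff_succ (hW : Monotone W) :
    Pairwise (Disjoint on fun j => W (j + 1) \ W j) :=
  (pairwise_disjoint_on _).2 fun i j hij =>
    (disjoint_sdiff_self_right (x := W j)).mono_left (sdiff_subset.trans (hW (by omega)))

theorem Monotone.iUnion_sdiff_succ (hW : Monotone W) :
    ⋃ j, (W (j + 1) \ W j) = (⋃ j, W j) \ ⋂ j, W j := by
  ext x
  simp only [mem_iUnion, Set.mem_sdiff, mem_iInter, not_forall]
  constructor
  · rintro ⟨j, hj1, hj⟩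
    exact ⟨⟨j + 1, hj1⟩, j, hj⟩
  · rintro ⟨⟨N, hN⟩, M, hM⟩
    obtain ⟨j, hj, hmax⟩ := Int.exists_greatest_of_bdd
      (P := fun k => x ∉ W k) ⟨N, fun k hk => not_lt.1 fun hNk => hk (hW hNk.le hN)⟩ ⟨M, hM⟩
    exact ⟨j, not_not.1 fun h => (hmax _ h).not_gt (lt_add_one j), hj⟩

end MonotoneInt

section ZPowSMul
variable {G α : Type*} [Group G] [MulAction G α] {g : G} {V : Set α}

theorem monotone_zpow_smul_set (hV : V ⊆ g • V) : Monotone fun j : ℤ => g ^ j • V :=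
  monotone_int_of_le_succ fun j => by
    simpa only [zpow_add_one, mul_smul] using smul_set_mono hV

theorem zpow_smul_set_sdiff (g : G) (V : Set α) (j : ℤ) :
    g ^ j • (g • V \ V) = g ^ (j + 1) • V \ g ^ j • V := by
  rw [smul_set_sdiff, zpow_add_one, mul_smul]

theorem pairwise_disjoint_zpow_smul_sdiff (hV : V ⊆ g • V) :
    Pairwise (Disjoint on fun j : ℤ => g ^ j • (g • V \ V)) := by
  simpa only [zpow_smul_set_sdiff] using (monotone_zpow_smul_set hV).pairwise_disjoint_sdiff_succ

theorem iUnion_zpow_smul_sdiff (hV : V ⊆ g • V) :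
    ⋃ j : ℤ, g ^ j • (g • V \ V) = (⋃ j : ℤ, g ^ j • V) \ ⋂ j : ℤ, g ^ j • V := by
  simpa only [zpow_smul_set_sdiff] using (monotone_zpow_smul_set hV).iUnion_sdiff_succ

theorem iUnion_zpow_smul_eq_univ [TopologicalSpace α] {a : α} (hV : V ∈ 𝓝 a)
    (hg : ∀ x, Tendsto (fun k : ℕ => g⁻¹ ^ k • x) atTop (𝓝 a)) :
    ⋃ j : ℤ, g ^ j • V = univ := by
  refine eq_univ_of_forall fun x => mem_iUnion.2 ?_
  obtain ⟨k, hk⟩ := ((hg x).eventually hV).exists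
  exact ⟨k, by rwa [mem_smul_set_iff_inv_smul_mem, zpow_natCast, ← inv_pow]⟩

theorem iInter_zpow_smul_subset [MetricSpace α] {a : α}
    (hg : TendstoUniformlyOn (fun (k : ℕ) x => g⁻¹ ^ k • x) (fun _ => a) atTop V) :
    ⋂ j : ℤ, g ^ j • V ⊆ {a} := by
  intro x hx
  refine (eq_of_forall_dist_le fun ε hε => ?_).symm
  obtain ⟨k, hk⟩ := (Metric.tendstoUniformlyOn_iff.1 hg ε hε).exists
  have hkx : g ^ k • x ∈ V := by
    simpa only [mem_smul_set_iff_inv_smul_mem, zpow_neg, inv_inv, zpow_natCast]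
      using mem_iInter.1 hx (-k)
  simpa only [inv_pow, inv_smul_smul] using (hk _ hkx).le

end ZPowSMul

section BanachAlgebra
variable {A : Type*} [NormedRing A] [NormedAlgebra ℂ A] [CompleteSpace A]

theorem tendsto_pow_nhds_zero_of_spectralRadius_lt_one {a : A} (ha : spectralRadius ℂ a < 1) :
    Tendsto (a ^ ·) atTop (𝓝 0) := by
  obtain ⟨r, hρr, hr1⟩ := ENNReal.lt_iff_exists_nnreal_btwn.1 ha
  have hroot := spectrum.pow_nnnorm_pow_one_div_tendsto_nhds_spectralRadius a
  have hbound : ∀ᶠ k : ℕ in atTop, ‖a ^ k‖ ≤ r ^ k := by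
    filter_upwards [hroot.eventually_lt_const hρr, eventually_gt_atTop 0] with k hk hk0
    rw [one_div, ENNReal.rpow_inv_lt_iff (by positivity), ENNReal.rpow_natCast] at hk
    exact_mod_cast hk.le
  exact squeeze_zero_norm' hbound
    (tendsto_pow_atTop_nhds_zero_of_lt_one r.coe_nonneg (by exact_mod_cast hr1))

theorem tendsto_pow_nhds_zero_of_forall_norm_lt_one {a : A} (ha : ∀ z ∈ spectrum ℂ a, ‖z‖ < 1) :
    Tendsto (a ^ ·) atTop (𝓝 0) := by
  rcases subsingleton_or_nontrivial A with hA | hA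
  · simpa only [Subsingleton.elim _ (0 : A)] using tendsto_const_nhds
  · refine tendsto_pow_nhds_zero_of_spectralRadius_lt_one ?_
    exact_mod_cast spectrum.spectralRadius_lt_of_forall_lt a (r := 1)
      fun z hz => by exact_mod_cast ha z hz

end BanachAlgebra

namespace Matrix

theorem tendstoUniformlyOn_mulVec_of_tendsto_zero {m n R ι : Type*} [Fintype m] [Fintype n]
    [NonUnitalSeminormedRing R] {l : Filter ι} {M : ι → Matrix m n R} (hM : Tendsto M l (𝓝 0)) {V : Set (n → R)}
    (hV : Bornology.IsBounded V) :
    TendstoUniformlyOn (fun i x => M i *ᵥ x) (fun _ => 0) l V := by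
  let := Matrix.linftyOpSeminormedAddCommGroup (m := m) (n := n) (α := R)
  obtain ⟨C, hC⟩ := hV.exists_norm_le
  have hMC : Tendsto (fun i => ‖M i‖ * C) l (𝓝 0) := by
    simpa using hM.norm.mul_const C
  rw [Metric.tendstoUniformlyOn_iff]
  intro ε hε
  filter_upwards [hMC.eventually_lt_const hε] with i hi x hx
  rw [dist_zero_left]
  calc ‖M i *ᵥ x‖ ≤ ‖M i‖ * ‖x‖ := linfty_opNorm_mulVec _ _
    _ ≤ ‖M i‖ * C := mul_le_mul_of_nonneg_left (hC x hx) (norm_nonneg _)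
    _ < ε := hi

variable {n : Type*} [Fintype n] [DecidableEq n]

theorem isUnit_of_zero_notMem_spectrum_map {A : Matrix n n ℝ}
    (h : (0 : ℂ) ∉ spectrum ℂ (A.map (Complex.ofReal ·))) : IsUnit A := by
  have := spectrum.isUnit_of_zero_notMem ℂ h
  rw [isUnit_iff_isUnit_det] at this ⊢
  rw [show (A.map (Complex.ofReal ·)).det = A.det from (Complex.ofRealHom.map_det A).symm,
    isUnit_iff_ne_zero, Complex.ofReal_ne_zero] at this
  exact this.isUnit

namespace GeneralLinearGroup

theorem tendsto_inv_pow_nhds_zero (u : GL n ℝ)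
    (hu : ∀ μ ∈ spectrum ℂ ((u : Matrix n n ℝ).map (Complex.ofReal ·)), 1 < ‖μ‖) :
    Tendsto (fun k : ℕ => ((u⁻¹ ^ k : GL n ℝ) : Matrix n n ℝ)) atTop (𝓝 0) := by
  -- Any Banach-algebra norm does here: it induces the usual topology on matrices.
  let := Matrix.linftyOpNormedRing (n := n) (α := ℂ)
  let := Matrix.linftyOpNormedAlgebra (n := n) (R := ℂ) (α := ℂ)
  set w := map Complex.ofRealHom u
  have hw : ∀ z ∈ spectrum ℂ (↑w⁻¹ : Matrix n n ℂ), ‖z‖ < 1 := by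
    intro z hz
    rw [← spectrum.map_inv, Set.mem_inv] at hz
    have := hu _ hz
    rw [norm_inv] at this
    exact (one_lt_inv_iff₀.1 this).2
  have hre : Continuous fun M : Matrix n n ℂ => M.map Complex.re :=
    continuous_id.matrix_map Complex.continuous_re
  have hre_pow (k : ℕ) : ((↑w⁻¹ : Matrix n n ℂ) ^ k).map Complex.re = ↑(u⁻¹ ^ k) := by
    rw [← Units.val_pow_eq_pow_val, ← map_inv, ← map_pow]
    ext i j
    exact Complex.ofReal_re _
  simpa only [comp_def, hre_pow, Matrix.map_zero _ Complex.zero_re] using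
    (hre.tendsto 0).comp (tendsto_pow_nhds_zero_of_forall_norm_lt_one hw)

end GeneralLinearGroup
end Matrix

theorem zMatPow_coe_units {d : ℕ} (u : GL (Fin d) ℝ) (j : ℤ) :
    zMatPow (u : Matrix (Fin d) (Fin d) ℝ) j = ↑(u ^ j) := by
  unfold zMatPow
  split_ifs with h
  · lift j to ℕ using h
    simp
  · obtain ⟨k, rfl⟩ : ∃ k : ℕ, j = -k := ⟨(-j).toNat, by omega⟩
    simp [zpow_neg, Matrix.coe_units_inv]

/-- for a dilation matrix `A` and a bounded set `V` with
`0 ∈ V°` and `V ⊆ AV`, the sets `A^j C`, `C = AV \ V`, are pairwise disjoint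
and their union is `ℝ^d \ {0}`. -/
theorem dilation_annuli_partition (d : ℕ) (A : Matrix (Fin d) (Fin d) ℝ)
    (hA : ∀ μ ∈ spectrum ℂ (A.map (Complex.ofReal ·)), 1 < ‖μ‖)
    (V : Set (Fin d → ℝ)) (hVb : Bornology.IsBounded V)
    (hV0 : (0 : Fin d → ℝ) ∈ interior V)
    (hVA : V ⊆ (fun x => A.mulVec x) '' V)
    (C : Set (Fin d → ℝ)) (hC : C = ((fun x => A.mulVec x) '' V) \ V) :
    (∀ i j : ℤ, i ≠ j →
      Disjoint ((fun x => (zMatPow A i).mulVec x) '' C)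
        ((fun x => (zMatPow A j).mulVec x) '' C)) ∧
    (⋃ j : ℤ, (fun x => (zMatPow A j).mulVec x) '' C) = Set.univ \ {0} := by
  obtain ⟨u, rfl⟩ :=
    Matrix.isUnit_of_zero_notMem_spectrum_map fun h0 => (hA 0 h0).not_ge (by simp)
  set g := Matrix.GeneralLinearGroup.toLin u
  have himage (j : ℤ) (S : Set (Fin d → ℝ)) :
      (fun x => (zMatPow (u : Matrix (Fin d) (Fin d) ℝ) j).mulVec x) '' S = g ^ j • S := by
    rw [← map_zpow, ← image_smul, zMatPow_coe_units]
    rfl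
  have hAg : (fun x => (u : Matrix (Fin d) (Fin d) ℝ).mulVec x) '' V = g • V := by
    simpa only [zMatPow_coe_units, zpow_one] using himage 1 V
  have hgV : V ⊆ g • V := hAg ▸ hVA
  have hunif {S : Set (Fin d → ℝ)} (hS : Bornology.IsBounded S) :
      TendstoUniformlyOn (fun (k : ℕ) x => g⁻¹ ^ k • x) (fun _ => 0) atTop S := by
    simp only [g, ← map_inv, ← map_pow]
    exact Matrix.tendstoUniformlyOn_mulVec_of_tendsto_zero
      (Matrix.GeneralLinearGroup.tendsto_inv_pow_nhds_zero u hA) hS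
  simp only [himage, hC, hAg]
  refine ⟨pairwise_disjoint_zpow_smul_sdiff hgV, ?_⟩
  rw [iUnion_zpow_smul_sdiff hgV,
    iUnion_zpow_smul_eq_univ (mem_interior_iff_mem_nhds.1 hV0)
      fun x => (hunif Bornology.isBounded_singleton).tendsto_at (mem_singleton x),
    (iInter_zpow_smul_subset (hunif hVb)).antisymm
      (singleton_subset_iff.2 (mem_iInter.2 fun j => zero_mem_smul_set (interior_subset hV0)))]
end

section
/- Let φ: R^d → C be a compactly supported refinable function φ(x) = Σ_{k∈Λ} c_kφ(Ax−k) with linearly independent Γ-translates, having accuracy κ (every polynomial of degree < κ lies in S(φ)). Let Ω ⊆ Γ be a finite Λ-admissible set such that the restriction map properties of Proposition on spectra hold, and T = [c_{Ai−j}]_{i,j∈Ω}. If λ_1,…,λ_d are the eigenvalues of A and η = (1/λ_1,…,1/λ_d), then for every 0 ≤ s ≤ κ−1 and every multi-index α with |α| = s, the product η^α = λ_1^{-α_1}···λ_d^{-α_d} is an eigenvalue of T. -/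
open scoped BigOperators
open Polynomial

/-- A full-rank lattice in `ℝ^d`: the `ℤ`-span (additive closure) of an `ℝ`-basis. -/
def IsLattice {d : ℕ} (Γ : AddSubgroup (Fin d → ℝ)) : Prop :=
  ∃ B : Module.Basis (Fin d) ℝ (Fin d → ℝ), Γ = AddSubgroup.closure (Set.range ⇑B)

/-- `A` is a dilation matrix for `Γ`. -/
def IsDilation {d : ℕ} (A : Matrix (Fin d) (Fin d) ℝ) (Γ : AddSubgroup (Fin d → ℝ)) : Prop :=
  (∀ x ∈ Γ, A.mulVec x ∈ Γ) ∧ ∀ μ ∈ spectrum ℂ (A.map (Complex.ofReal ·)), 1 < ‖μ‖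

/-!
Left eigenvectors `wᵢ` of `A`, `wᵢ A = λᵢ wᵢ`, give linear forms `ℓᵢ x = wᵢ ⬝ᵥ x` with
`ℓᵢ (A x) = λᵢ ℓᵢ x`, so `p = ∏ ℓᵢ ^ αᵢ` has degree `|α| < κ` and `p x = η^α p (A x)`.
By accuracy `p = ∑ₖ yₖ φ (· + k)`; inserting the refinement equation and comparing coefficients
(linear independence of the translates) shows that `y` is a left eigenvector of the bi-infinite
matrix `[c_{Ai-j}]` for `η^α`. Admissibility makes `y` restricted to `Ω` a left eigenvector of `T`.
It is nonzero: the eigen-equation propagates vanishing of `y` from `Ω n` to `Ω (n + 1)`, hence to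
all of `Γ`, which would force `p = 0`.
-/

open Function Matrix

namespace Matrix

variable {n K : Type*} [Fintype n] [DecidableEq n] [Field K]

theorem mem_spectrum_iff_exists_vecMul_eq_smul {M : Matrix n n K} {θ : K} :
    θ ∈ spectrum K M ↔ ∃ v ≠ 0, v ᵥ* M = θ • v := by
  rw [spectrum.mem_iff, isUnit_iff_isUnit_det, isUnit_iff_ne_zero, not_not,
    ← exists_vecMul_eq_zero_iff]
  refine exists_congr fun v => and_congr_right fun _ => ?_
  rw [vecMul_sub, Algebra.algebraMap_eq_smul_one, vecMul_smul, vecMul_one, sub_eq_zero, eq_comm]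

end Matrix

theorem IsDilation.isUnit {d : ℕ} {A : Matrix (Fin d) (Fin d) ℝ} {Γ : AddSubgroup (Fin d → ℝ)}
    (hA : IsDilation A Γ) : IsUnit A := by
  have hC : IsUnit (A.map (Complex.ofReal ·)) := by
    by_contra h
    exact absurd (hA.2 0 ((spectrum.zero_mem_iff ℂ).2 h)) (by norm_num)
  have hdet : (A.map (Complex.ofReal ·)).det = A.det := (Complex.ofRealHom.map_det A).symm
  rw [isUnit_iff_isUnit_det, hdet, isUnit_iff_ne_zero, Complex.ofReal_ne_zero] at hC
  exact A.isUnit_iff_isUnit_det.2 hC.isUnit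

namespace MvPolynomial

variable {σ R : Type*} [Fintype σ] [CommSemiring R]

noncomputable def linearForm (w : σ → R) : MvPolynomial σ R := ∑ j, C (w j) * X j

@[simp]
theorem eval_linearForm (w v : σ → R) : eval v (linearForm w) = w ⬝ᵥ v := by
  simp [linearForm, dotProduct]

theorem isHomogeneous_linearForm (w : σ → R) : (linearForm w).IsHomogeneous 1 :=
  IsHomogeneous.sum _ _ _ fun j _ => isHomogeneous_C_mul_X (w j) j

theorem totalDegree_prod_linearForm_pow_le {ι : Type*} [Fintype ι] (w : ι → σ → R) (α : ι → ℕ) :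
    (∏ i, linearForm (w i) ^ α i).totalDegree ≤ ∑ i, α i := by
  refine (IsHomogeneous.prod _ _ (fun i => α i) fun i _ => ?_).totalDegree_le
  simpa using (isHomogeneous_linearForm (w i)).pow (α i)

theorem eval_prod_linearForm_pow_mulVec {ι : Type*} [Fintype ι] {w : ι → σ → R} {μ : ι → R}
    {M : Matrix σ σ R} (hw : ∀ i, w i ᵥ* M = μ i • w i) (α : ι → ℕ) (v : σ → R) :
    eval (M *ᵥ v) (∏ i, linearForm (w i) ^ α i)
      = (∏ i, μ i ^ α i) * eval v (∏ i, linearForm (w i) ^ α i) := by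
  simp only [map_prod, map_pow, eval_linearForm, dotProduct_mulVec, hw, smul_dotProduct,
    smul_eq_mul, mul_pow, Finset.prod_mul_distrib]

theorem exists_real_eval_prod_linearForm_pow_ne_zero {ι : Type*} [Fintype ι]
    {w : ι → σ → ℂ} (hw : ∀ i, w i ≠ 0) (α : ι → ℕ) :
    ∃ x : σ → ℝ, eval (fun j => (x j : ℂ)) (∏ i, linearForm (w i) ^ α i) ≠ 0 := by
  have hne : ∏ i, linearForm (w i) ^ α i ≠ 0 := by
    refine Finset.prod_ne_zero_iff.2 fun i _ => pow_ne_zero _ fun h => hw i ?_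
    exact dotProduct_eq_zero _ fun v => by simpa using congrArg (eval v) h
  by_contra! h
  refine hne (funext_set (fun _ => Set.range ((↑) : ℝ → ℂ))
    (fun _ => Set.infinite_range_of_injective Complex.ofReal_injective) fun v hv => ?_)
  choose x hx using fun j => hv j trivial
  obtain rfl : (fun j => (x j : ℂ)) = v := _root_.funext hx
  simpa using h x

end MvPolynomial

theorem IsLattice.finite_setOf_mem {d : ℕ} {Γ : AddSubgroup (Fin d → ℝ)} (hΓ : IsLattice Γ)
    {s : Set (Fin d → ℝ)} (hs : Bornology.IsBounded s) :
    {γ : Γ | (γ : Fin d → ℝ) ∈ s}.Finite := by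
  obtain ⟨b, rfl⟩ := hΓ
  rw [← Submodule.span_int_eq_addSubgroupClosure]
  exact ((ZSpan.setFinite_inter b hs).preimage Subtype.val_injective.injOn).subset
    fun γ hγ => ⟨hγ, γ.2⟩

theorem IsLattice.finite_support_translate {d : ℕ} {Γ : AddSubgroup (Fin d → ℝ)} {R : Type*}
    [Zero R] (hΓ : IsLattice Γ) {φ : (Fin d → ℝ) → R} (hφ : HasCompactSupport φ)
    (x : Fin d → ℝ) : (support fun γ : Γ => φ (x + γ)).Finite :=
  (hΓ.finite_setOf_mem (hφ.isCompact.image (continuous_sub_right x)).isBounded).subset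
    fun γ hγ => ⟨x + γ, subset_tsupport φ hγ, add_sub_cancel_left x γ⟩

theorem eq_of_forall_finsum_mul_translate_eq {V R : Type*} [AddCommGroup V] [Ring R]
    {Γ : AddSubgroup V} {φ : V → R} (hφ : ∀ x, (support fun γ : Γ => φ (x + γ)).Finite)
    (hind : ∀ a : Γ → R, (∀ x, ∑ᶠ k : Γ, a k * φ (x - k) = 0) → a = 0) {a b : Γ → R}
    (h : ∀ x, ∑ᶠ k : Γ, a k * φ (x + k) = ∑ᶠ k : Γ, b k * φ (x + k)) : a = b := by
  have hfin (f : Γ → R) (x : V) : (support fun k : Γ => f k * φ (x + k)).Finite :=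
    (hφ x).subset (support_mul_subset_right _ _)
  have h0 := hind (fun k => a (-k) - b (-k)) fun x => by
    calc ∑ᶠ k : Γ, (a (-k) - b (-k)) * φ (x - k) = ∑ᶠ k : Γ, (a k - b k) * φ (x + k) := by
          simpa [sub_eq_add_neg] using
            finsum_comp_equiv (Equiv.neg Γ) (f := fun k => (a k - b k) * φ (x + k))
      _ = 0 := by
          simp_rw [sub_mul]
          rw [finsum_sub_distrib (hfin a x) (hfin b x), h x, sub_self]
  funext k
  simpa [sub_eq_zero] using congrFun h0 (-k)

theorem finsum_mul_finsum_sub_eq {G R : Type*} [AddCommGroup G] [CommSemiring R]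
    [NoZeroDivisors R] {e : G → G} (he : Injective e) {a ψ : G → R} (ha : (support a).Finite)
    (hψ : (support ψ).Finite) (y : G → R) :
    ∑ᶠ k, y k * ∑ᶠ l, a l * ψ (e k - l) = ∑ᶠ m, (∑ᶠ k, a (e k - m) * y k) * ψ m := by
  set F : G × G → R := fun q => a (e q.1 - q.2) * y q.1 * ψ q.2
  have hF : (support F).Finite := by
    refine ((((hψ.add ha).preimage he.injOn)).prod hψ).subset fun q hq => ?_
    have ha' : a (e q.1 - q.2) ≠ 0 := left_ne_zero_of_mul (left_ne_zero_of_mul hq)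
    exact ⟨⟨q.2, right_ne_zero_of_mul hq, _, ha', add_sub_cancel q.2 (e q.1)⟩,
      right_ne_zero_of_mul hq⟩
  have hF' : (support fun q : G × G => F q.swap).Finite := hF.preimage Prod.swap_injective.injOn
  calc ∑ᶠ k, y k * ∑ᶠ l, a l * ψ (e k - l) = ∑ᶠ k, ∑ᶠ m, F (k, m) := by
        refine finsum_congr fun k => ?_
        rw [← finsum_comp_equiv (Equiv.subLeft (e k)), mul_finsum]
        simp only [Equiv.subLeft_apply, sub_sub_cancel, F]
        exact finsum_congr fun m => by ring
    _ = ∑ᶠ m, ∑ᶠ k, F (k, m) := by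
        rw [← finsum_curry F hF, ← finsum_comp_equiv (Equiv.prodComm G G)]
        exact finsum_curry (fun q => F q.swap) hF'
    _ = ∑ᶠ m, (∑ᶠ k, a (e k - m) * y k) * ψ m :=
        finsum_congr fun m => by rw [finsum_mul]

theorem finsum_addSubgroup_eq_sum {V R : Type*} [AddCommGroup V] [AddCommMonoid R]
    {Γ : AddSubgroup V} {Λ : Finset V} (hΛ : (Λ : Set V) ⊆ Γ) {g : V → R}
    (hg : ∀ v ∉ Λ, g v = 0) : ∑ᶠ l : Γ, g l = ∑ v ∈ Λ, g v :=
  (finsum_set_coe_eq_finsum_mem (Γ : Set V)).trans <| finsum_mem_eq_sum_of_subset g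
    (fun v hv => not_imp_comm.1 (hg v) hv.2) hΛ

namespace Refinable

variable {d : ℕ} {Γ : AddSubgroup (Fin d → ℝ)} {A : Matrix (Fin d) (Fin d) ℝ}
  {Λ : Finset (Fin d → ℝ)} {c : (Fin d → ℝ) → ℂ} {φ : (Fin d → ℝ) → ℂ}

theorem finsum_mul_translate_eq_finsum_transition (hΓ : IsLattice Γ)
    (hAΓ : ∀ x ∈ Γ, A *ᵥ x ∈ Γ) (hA : Injective (A *ᵥ ·)) (hΛ : (Λ : Set (Fin d → ℝ)) ⊆ Γ)
    (hc : ∀ k, k ∉ Λ → c k = 0) (hsupp : HasCompactSupport φ)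
    (href : ∀ x, φ x = ∑ k ∈ Λ, c k * φ (A *ᵥ x - k)) (y : Γ → ℂ) (x : Fin d → ℝ) :
    ∑ᶠ k : Γ, y k * φ (x + k)
      = ∑ᶠ m : Γ, (∑ᶠ k : Γ, c (A *ᵥ k - m) * y k) * φ (A *ᵥ x + m) := by
  let e : Γ → Γ := fun k => ⟨A *ᵥ k, hAΓ k k.2⟩
  have he : Injective e := fun k k' h => Subtype.ext (hA (congrArg Subtype.val h))
  have hcfin : (support fun l : Γ => c l).Finite :=
    (Λ.finite_toSet.preimage Subtype.val_injective.injOn).subset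
      fun l hl => not_imp_comm.1 (hc l) hl
  have hφ (k : Γ) : φ (x + k) = ∑ᶠ l : Γ, c l * φ (A *ᵥ x + (A *ᵥ k - l)) := by
    rw [href, ← finsum_addSubgroup_eq_sum hΛ fun v hv => by simp only [hc v hv, zero_mul]]
    simp only [mulVec_add, add_sub_assoc]
  simp_rw [hφ]
  exact finsum_mul_finsum_sub_eq he hcfin (hΓ.finite_support_translate hsupp _) y

theorem finsum_transition_eq_mul_of_scaling (hΓ : IsLattice Γ)
    (hAΓ : ∀ x ∈ Γ, A *ᵥ x ∈ Γ) (hA : IsUnit A) (hΛ : (Λ : Set (Fin d → ℝ)) ⊆ Γ)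
    (hc : ∀ k, k ∉ Λ → c k = 0) (hsupp : HasCompactSupport φ)
    (href : ∀ x, φ x = ∑ k ∈ Λ, c k * φ (A *ᵥ x - k))
    (hind : ∀ α : Γ → ℂ, (∀ x, ∑ᶠ k : Γ, α k * φ (x - k) = 0) → α = 0)
    {y : Γ → ℂ} {θ : ℂ}
    (hy : ∀ x, ∑ᶠ k : Γ, y k * φ (x + k) = θ * ∑ᶠ k : Γ, y k * φ (A *ᵥ x + k)) (m : Γ) :
    ∑ᶠ k : Γ, c (A *ᵥ k - m) * y k = θ * y m := by
  refine congrFun (eq_of_forall_finsum_mul_translate_eq (hΓ.finite_support_translate hsupp) hind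
    (a := fun m => ∑ᶠ k : Γ, c (A *ᵥ k - m) * y k) (b := fun m => θ * y m) fun u => ?_) m
  obtain ⟨x, rfl⟩ := mulVec_surjective_iff_isUnit.2 hA u
  rw [← finsum_mul_translate_eq_finsum_transition hΓ hAΓ (mulVec_injective_iff_isUnit.2 hA) hΛ hc
    hsupp href, hy, mul_finsum]
  exact finsum_congr fun k => (mul_assoc _ _ _).symm

theorem finsum_transition_eq_sum (hc : ∀ k, k ∉ Λ → c k = 0) {s t : Finset Γ}
    (hst : ∀ i : Γ, (∃ w ∈ s, ∃ l ∈ Λ, A *ᵥ i.1 = w.1 + l) → i ∈ t) {m : Γ} (hm : m ∈ s)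
    (y : Γ → ℂ) : ∑ᶠ k : Γ, c (A *ᵥ k - m) * y k = ∑ k ∈ t, c (A *ᵥ k - m) * y k :=
  finsum_eq_sum_of_support_subset _ fun k hk =>
    hst k ⟨m, hm, _, not_imp_comm.1 (hc _) (left_ne_zero_of_mul hk), (add_sub_cancel _ _).symm⟩

theorem eq_zero_of_forall_mem_eq_zero (hc : ∀ k, k ∉ Λ → c k = 0) {Ω : ℕ → Finset Γ}
    (hstep : ∀ n, ∀ i : Γ, (∃ w ∈ Ω (n + 1), ∃ l ∈ Λ, A *ᵥ i.1 = w.1 + l) → i ∈ Ω n)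
    (hmono : Monotone Ω) (hunion : (⋃ n, (Ω n : Set Γ)) = Set.univ) {y : Γ → ℂ} {θ : ℂ}
    (hθ : θ ≠ 0) (hy : ∀ m : Γ, ∑ᶠ k : Γ, c (A *ᵥ k - m) * y k = θ * y m) {n : ℕ}
    (h0 : ∀ m ∈ Ω n, y m = 0) : y = 0 := by
  have hvanish (j : ℕ) : ∀ m ∈ Ω (n + j), y m = 0 := by
    induction j with
    | zero => exact h0
    | succ j ih =>
      intro m hm
      have h := hy m
      rw [finsum_transition_eq_sum hc (hstep (n + j)) hm,
        Finset.sum_eq_zero fun k hk => by rw [ih k hk, mul_zero]] at h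
      exact (mul_eq_zero.1 h.symm).resolve_left hθ
  funext m
  obtain ⟨N, hN⟩ := Set.mem_iUnion.1 (hunion.symm ▸ Set.mem_univ m)
  exact hvanish N m (hmono (Nat.le_add_left N n) hN)

theorem mem_spectrum_of_forall_finsum_transition_eq (hc : ∀ k, k ∉ Λ → c k = 0) {s : Finset Γ}
    (hs : ∀ i : Γ, (∃ w ∈ s, ∃ l ∈ Λ, A *ᵥ i.1 = w.1 + l) → i ∈ s) {y : Γ → ℂ} {θ : ℂ}
    (hy : ∀ m : Γ, ∑ᶠ k : Γ, c (A *ᵥ k - m) * y k = θ * y m) (hne : ∃ m ∈ s, y m ≠ 0) :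
    θ ∈ spectrum ℂ (Matrix.of fun i j : s => c (A *ᵥ i.1.1 - j.1.1)) := by
  obtain ⟨m, hm, hym⟩ := hne
  refine mem_spectrum_iff_exists_vecMul_eq_smul.2
    ⟨fun i => y i, fun h => hym (congrFun h ⟨m, hm⟩), funext fun j => ?_⟩
  rw [Pi.smul_apply, smul_eq_mul, ← hy, finsum_transition_eq_sum hc hs j.2, vecMul, dotProduct,
    ← s.sum_coe_sort]
  exact Finset.sum_congr rfl fun i _ => mul_comm _ _

end Refinable

theorem accuracy_gives_eigenvalues_general (d : ℕ) (Γ : AddSubgroup (Fin d → ℝ))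
    (A : Matrix (Fin d) (Fin d) ℝ) (Λ : Finset (Fin d → ℝ)) (c : (Fin d → ℝ) → ℂ)
    (φ : (Fin d → ℝ) → ℂ) (κ : ℕ)
    (hΓ : IsLattice Γ) (hA : IsDilation A Γ)
    (hΛ : (Λ : Set (Fin d → ℝ)) ⊆ (Γ : Set (Fin d → ℝ)))
    (hc : ∀ k, k ∉ Λ → c k = 0)
    (hsupp : HasCompactSupport φ)
    (href : ∀ x, φ x = ∑ k ∈ Λ, c k * φ (A.mulVec x - k))
    (hind : ∀ α : ↥Γ → ℂ, (∀ x, ∑ᶠ k : ↥Γ, α k * φ (x - k.1) = 0) → α = 0)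
    (hacc : ∀ p : MvPolynomial (Fin d) ℂ, p.totalDegree < κ →
      ∃ y : ↥Γ → ℂ, ∀ x : Fin d → ℝ,
        MvPolynomial.eval (fun i => (x i : ℂ)) p = ∑ᶠ k : ↥Γ, y k * φ (x + k.1))
    (Ω : ℕ → Finset ↥Γ)
    (hmono : ∀ n, Ω n ⊂ Ω (n + 1))
    (hunion : (⋃ n, (Ω n : Set ↥Γ)) = Set.univ)
    (hstep : ∀ n, ∀ i : ↥Γ, (∃ w ∈ Ω (n + 1), ∃ l ∈ Λ, A.mulVec i.1 = w.1 + l) → i ∈ Ω n)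
    (n : ℕ)
    (μ : Fin d → ℂ)
    (hμ : (A.map (Complex.ofReal ·)).charpoly = ∏ i, (X - C (μ i))) :
    ∀ α : Fin d → ℕ, (∑ i, α i) < κ →
      (∏ i, (μ i)⁻¹ ^ α i) ∈
        spectrum ℂ (Matrix.of fun i j : {x // x ∈ Ω n} =>
          c (A.mulVec i.1.1 - j.1.1)) := by
  intro α hα
  have hμ_spec (i : Fin d) : μ i ∈ spectrum ℂ (A.map (Complex.ofReal ·)) := by
    rw [Matrix.mem_spectrum_iff_isRoot_charpoly, hμ, IsRoot, eval_prod]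
    exact Finset.prod_eq_zero (Finset.mem_univ i) (by simp)
  choose w hw0 hw using fun i => mem_spectrum_iff_exists_vecMul_eq_smul.1 (hμ_spec i)
  obtain ⟨y, hy⟩ := hacc _ ((MvPolynomial.totalDegree_prod_linearForm_pow_le w α).trans_lt hα)
  have hθμ : (∏ i, (μ i)⁻¹ ^ α i) * ∏ i, μ i ^ α i = 1 := by
    refine Finset.prod_mul_distrib.symm.trans (Finset.prod_eq_one fun i _ => ?_)
    have hμ0 : μ i ≠ 0 := fun h => absurd (hA.2 _ (hμ_spec i)) (by simp [h])
    rw [← mul_pow, inv_mul_cancel₀ hμ0, one_pow]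
  have hscale (x : Fin d → ℝ) :
      ∑ᶠ k : Γ, y k * φ (x + k) = (∏ i, (μ i)⁻¹ ^ α i) * ∑ᶠ k : Γ, y k * φ (A *ᵥ x + k) := by
    have hx : (fun j => ((A *ᵥ x) j : ℂ)) = A.map (Complex.ofReal ·) *ᵥ fun j => (x j : ℂ) :=
      funext (RingHom.map_mulVec Complex.ofRealHom A x)
    rw [← hy, ← hy, hx, MvPolynomial.eval_prod_linearForm_pow_mulVec hw, ← mul_assoc, hθμ,
      one_mul]
  have hy_eigen :=
    Refinable.finsum_transition_eq_mul_of_scaling hΓ hA.1 hA.isUnit hΛ hc hsupp href hind hscale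
  refine Refinable.mem_spectrum_of_forall_finsum_transition_eq hc (fun i ⟨v, hv, l, hl, h⟩ =>
    hstep n i ⟨v, (hmono n).subset hv, l, hl, h⟩) hy_eigen ?_
  by_contra! hy0
  obtain ⟨x, hx⟩ := MvPolynomial.exists_real_eval_prod_linearForm_pow_ne_zero hw0 α
  refine hx ?_
  rw [hy, Refinable.eq_zero_of_forall_mem_eq_zero hc hstep
    (monotone_nat_of_le_succ fun n => (hmono n).subset) hunion (left_ne_zero_of_mul_eq_one hθμ)
    hy_eigen hy0]
  simp

/-- if `φ` has accuracy `κ` and linearly independent `Γ`-translates,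
and `η = (1/λ_1, …, 1/λ_d)` for the eigenvalues `λ_i` of `A`, then `η^α` is an
eigenvalue of `T = [c_{Ai−j}]_{i,j∈Ω}` for every multi-index `α` with `|α| < κ`. -/
theorem accuracy_gives_eigenvalues (d : ℕ) (Γ : AddSubgroup (Fin d → ℝ))
    (A : Matrix (Fin d) (Fin d) ℝ) (Λ : Finset (Fin d → ℝ)) (c : (Fin d → ℝ) → ℂ)
    (φ : (Fin d → ℝ) → ℂ) (κ : ℕ)
    (hΓ : IsLattice Γ) (hA : IsDilation A Γ)
    (hΛ : (Λ : Set (Fin d → ℝ)) ⊆ (Γ : Set (Fin d → ℝ)))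
    (hc : ∀ k, k ∉ Λ → c k = 0)
    (hsupp : HasCompactSupport φ)
    (href : ∀ x, φ x = ∑ k ∈ Λ, c k * φ (A.mulVec x - k))
    (hind : ∀ α : ↥Γ → ℂ, (∀ x, ∑ᶠ k : ↥Γ, α k * φ (x - k.1) = 0) → α = 0)
    (hacc : ∀ p : MvPolynomial (Fin d) ℂ, p.totalDegree < κ →
      ∃ y : ↥Γ → ℂ, ∀ x : Fin d → ℝ,
        MvPolynomial.eval (fun i => (x i : ℂ)) p = ∑ᶠ k : ↥Γ, y k * φ (x + k.1))
    (Ω : ℕ → Finset ↥Γ)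
    (hadm : ∀ n, ∀ i : ↥Γ, (∃ w ∈ Ω n, ∃ l ∈ Λ, A.mulVec i.1 = w.1 + l) → i ∈ Ω n)
    (hmono : ∀ n, Ω n ⊂ Ω (n + 1))
    (hunion : (⋃ n, (Ω n : Set ↥Γ)) = Set.univ)
    (hstep : ∀ n, ∀ i : ↥Γ, (∃ w ∈ Ω (n + 1), ∃ l ∈ Λ, A.mulVec i.1 = w.1 + l) → i ∈ Ω n)
    (n : ℕ)
    (μ : Fin d → ℂ)
    (hμ : (A.map (Complex.ofReal ·)).charpoly = ∏ i, (X - C (μ i))) :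
    ∀ α : Fin d → ℕ, (∑ i, α i) < κ →
      (∏ i, (μ i)⁻¹ ^ α i) ∈
        spectrum ℂ (Matrix.of fun i j : {x // x ∈ Ω n} =>
          c (A.mulVec i.1.1 - j.1.1)) :=
  accuracy_gives_eigenvalues_general d Γ A Λ c φ κ hΓ hA hΛ hc hsupp href hind hacc Ω hmono hunion
    hstep n μ hμ
end
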